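/- Partial duality satisfies (G^A)^B = G^{A Δ B} for any subsets A, B of the edge set, where Δ is symmetric difference; in particular G^A is an involution in each edge and (G^A)^A = G. -/
import Mathlib

/-!
STATEMENT 9: Partial duality satisfies (G^A)^B = G^{A Δ B} for any subsets
A, B of the edge set; in particular (G^A)^A = G.

A ribbon graph (cellularly embedded graph) is encoded by its graph-encoded
map (GEM): a set of flags `X` together with three maps `t0, t1, t2` (in the
geometric situation these are fixed-point-free involutions; vertices, edges
and faces are the orbits of ⟨t1,t2⟩, ⟨t0,t2⟩ and ⟨t0,t1⟩ respectively).
Geometric duality swaps `t0` and `t2`; the partial dual with respect to a set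
`A` of edges (i.e. a ⟨t0,t2⟩-invariant set of flags) swaps `t0` and `t2`
exactly on the flags of `A`.
-/

/-- A graph-encoded map (flag system) of a ribbon graph. -/
structure RibbonGEM (X : Type*) where
  t0 : X → X
  t1 : X → X
  t2 : X → X

open Classical in
/-- The partial dual with respect to the set of flags `A`: swap the roles of
`t0` and `t2` on `A`. -/
noncomputable def RibbonGEM.partialDual {X : Type*} (G : RibbonGEM X) (A : Set X) :
    RibbonGEM X where
  t0 := fun x => if x ∈ A then G.t2 x else G.t0 x
  t1 := G.t1
  t2 := fun x => if x ∈ A then G.t0 x else G.t2 x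

theorem partialDual_partialDual {X : Type*} (G : RibbonGEM X)
    (h0 : Function.Involutive G.t0) (h1 : Function.Involutive G.t1)
    (h2 : Function.Involutive G.t2)
    (A B : Set X) :
    (G.partialDual A).partialDual B = G.partialDual (symmDiff A B) ∧
      (G.partialDual A).partialDual A = G := by
  have key : ∀ A B : Set X,
      (G.partialDual A).partialDual B = G.partialDual (symmDiff A B) := by
    intro A B
    simp only [RibbonGEM.partialDual]
    congr 1 <;> funext x <;>
      by_cases hA : x ∈ A <;> by_cases hB : x ∈ B <;>
        simp [hA, hB, Set.mem_symmDiff]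
  refine ⟨key A B, ?_⟩
  rw [key A A, symmDiff_self]
  simp only [RibbonGEM.partialDual]
  cases G
  simp [Set.bot_eq_empty]
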